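/- arXiv:q-alg/9601014 — 2 statements merged into one kernel-verified Lean document; each statement's English description precedes it below -/
import Mathlib

section
/- In the semidirect product A ⋊ U, the element Ē := Σ_i S²(e_i)·f^i satisfies Ē·x = ε(x)·Ē for all x ∈ U and a·Ē = ε(a)·Ē for all a ∈ A. -/
open TensorProduct

/-- A pair of dually paired finite-dimensional Hopf algebras `U` (enveloping-algebra type) and
`A` (function-algebra type) over a field `k`, with a nondegenerate pairing realized by finite
dual bases `{e i} ⊂ U`, `{f i} ⊂ A`, and invertible antipodes. -/
structure PairedHopf (k U A : Type*) (ι : Type*) [Field k] [Ring U] [Ring A]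
    [HopfAlgebra k U] [HopfAlgebra k A] [Fintype ι] [DecidableEq ι] where
  pair : U →ₗ[k] A →ₗ[k] k
  pair_mul_left : ∀ (x y : U) (a : A), pair (x * y) a =
    (LinearMap.mul' k k ∘ₗ TensorProduct.map (pair x) (pair y)) (Coalgebra.comul (R := k) a)
  pair_mul_right : ∀ (x : U) (a b : A), pair x (a * b) =
    (LinearMap.mul' k k ∘ₗ TensorProduct.map (pair.flip a) (pair.flip b))
      (Coalgebra.comul (R := k) x)
  pair_antipode : ∀ (x : U) (a : A),
    pair (HopfAlgebra.antipode (R := k) x) a = pair x (HopfAlgebra.antipode (R := k) a)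
  pair_one_left : ∀ a : A, pair 1 a = Coalgebra.counit (R := k) a
  pair_one_right : ∀ x : U, pair x 1 = Coalgebra.counit (R := k) x
  SinvU : U →ₗ[k] U
  SinvA : A →ₗ[k] A
  SinvU_antipode : ∀ x : U, SinvU (HopfAlgebra.antipode (R := k) x) = x
  antipode_SinvU : ∀ x : U, HopfAlgebra.antipode (R := k) (SinvU x) = x
  SinvA_antipode : ∀ a : A, SinvA (HopfAlgebra.antipode (R := k) a) = a
  antipode_SinvA : ∀ a : A, HopfAlgebra.antipode (R := k) (SinvA a) = a
  e : ι → U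
  f : ι → A
  pair_basis : ∀ i j, pair (e i) (f j) = if i = j then 1 else 0
  expand_U : ∀ x : U, ∑ i, pair x (f i) • e i = x
  expand_A : ∀ a : A, ∑ i, pair (e i) a • f i = a

open TensorProduct in
/-- The right-hand side `a₍₁₎ ⟨x₍₁₎, a₍₂₎⟩ x₍₂₎` of the cross relation in the semidirect
product `A ⋊ U`, as a linear map `U ⊗ A → H` (where `ιA`, `ιU` embed `A`, `U` into `H`). -/
noncomputable def crossRHS {k U A H : Type*} [Field k] [Ring U] [Ring A] [Ring H]
    [HopfAlgebra k U] [HopfAlgebra k A] [Algebra k H]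
    (pair : U →ₗ[k] A →ₗ[k] k) (ιA : A →ₐ[k] H) (ιU : U →ₐ[k] H) :
    U ⊗[k] A →ₗ[k] H :=
  (TensorProduct.lid k H).toLinearMap
    ∘ₗ TensorProduct.map (TensorProduct.lift pair)
        (TensorProduct.lift (LinearMap.mk₂ k (fun x a => ιA a * ιU x)
          (fun x y a => by simp [mul_add])
          (fun c x a => by simp [mul_smul_comm])
          (fun x a b => by simp [add_mul])
          (fun c x a => by simp [smul_mul_assoc])))
    ∘ₗ (TensorProduct.tensorTensorTensorComm k U U A A).toLinearMap
    ∘ₗ TensorProduct.map LinearMap.id (TensorProduct.comm k A A).toLinearMap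
    ∘ₗ TensorProduct.map (Coalgebra.comul (R := k)) (Coalgebra.comul (R := k))

/-! Since `x₍₂₎ S⁻¹(x₍₁₎) = ε(x)`, the cross relation inverts to `a x = x₍₂₎ (S⁻¹(x₍₁₎) ⇀ a)`,
where `y ⇀ a = a₍₁₎ ⟨y, a₍₂₎⟩` is the transpose of right multiplication by `y`. Moving `x` to
the left through `Ē` this way turns `Ē x` into `∑ᵢ S²(eᵢ) S(x₍₁₎) x₍₂₎ fᵢ = ε(x) Ē`. Writing
`Ē = ∑ᵢ eᵢ S²(fᵢ)` and moving `a` to the right gives `a Ē = ∑ᵢ eᵢ a₍₁₎ S(a₍₂₎) S²(fᵢ) = ε(a) Ē`.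
All Sweedler sums are expanded in the dual bases, where coassociativity becomes associativity of
the pairing. -/

open Coalgebra HopfAlgebra

lemma HopfAlgebra.antipode_antipode_mul {R B : Type*} [CommSemiring R] [Semiring B]
    [HopfAlgebra R B] (a b : B) :
    antipode R (antipode R (a * b)) = antipode R (antipode R a) * antipode R (antipode R b) := by
  rw [antipode_mul_antidistrib, antipode_mul_antidistrib]

namespace PairedHopf

variable {k U A ι : Type*} [Field k] [Ring U] [Ring A] [HopfAlgebra k U] [HopfAlgebra k A]
  [Fintype ι] [DecidableEq ι] (P : PairedHopf k U A ι)

section Basis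

variable {M : Type*} [AddCommMonoid M] [Module k M]

lemma sum_pair_smul_map_e (g : U →ₗ[k] M) (x : U) : ∑ i, P.pair x (P.f i) • g (P.e i) = g x := by
  simp_rw [← map_smul, ← map_sum, P.expand_U]

lemma sum_pair_smul_map_f (g : A →ₗ[k] M) (a : A) : ∑ i, P.pair (P.e i) a • g (P.f i) = g a := by
  simp_rw [← map_smul, ← map_sum, P.expand_A]

lemma eq_of_forall_pair_eq {a b : A} (h : ∀ z, P.pair z a = P.pair z b) : a = b := by
  rw [← P.expand_A a, ← P.expand_A b]
  simp only [h]

lemma sum_map_left_eq_sum_map_right (Φ : U →ₗ[k] A →ₗ[k] M) (T : U → U) (T' : A → A)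
    (hT : ∀ z b, P.pair (T z) b = P.pair z (T' b)) :
    ∑ i, Φ (T (P.e i)) (P.f i) = ∑ i, Φ (P.e i) (T' (P.f i)) := by
  calc ∑ i, Φ (T (P.e i)) (P.f i)
      = ∑ i, ∑ j, P.pair (P.e i) (T' (P.f j)) • Φ (P.e j) (P.f i) := by
        refine Finset.sum_congr rfl fun i _ => ?_
        conv_lhs => rw [← P.expand_U (T (P.e i))]
        simp only [map_sum, map_smul, LinearMap.sum_apply, LinearMap.smul_apply, hT]
    _ = ∑ i, Φ (P.e i) (T' (P.f i)) := by
        rw [Finset.sum_comm]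
        exact Finset.sum_congr rfl fun j _ => P.sum_pair_smul_map_f (Φ (P.e j)) _

end Basis

lemma comul_eq_sum (x : U) :
    comul (R := k) x = ∑ j, ∑ l, P.pair x (P.f j * P.f l) • (P.e j ⊗ₜ[k] P.e l) := by
  have expand : ∀ t : U ⊗[k] U, t = ∑ j, ∑ l,
      (LinearMap.mul' k k ∘ₗ TensorProduct.map (P.pair.flip (P.f j)) (P.pair.flip (P.f l))) t •
        (P.e j ⊗ₜ[k] P.e l) := by
    intro t
    induction t with
    | zero => simp
    | tmul u v =>
      simp only [LinearMap.comp_apply, TensorProduct.map_tmul, LinearMap.mul'_apply,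
        LinearMap.flip_apply]
      conv_lhs => rw [← P.expand_U u, ← P.expand_U v]
      simp only [TensorProduct.sum_tmul, TensorProduct.tmul_sum, TensorProduct.smul_tmul_smul]
      exact Finset.sum_comm
    | add s t hs ht =>
      conv_lhs => rw [hs, ht]
      simp only [map_add, add_smul, Finset.sum_add_distrib]
  rw [expand (comul x)]
  simp only [← P.pair_mul_right]

lemma sum_pair_smul_antipode_mul (x : U) :
    ∑ j, ∑ l, P.pair x (P.f j * P.f l) • (antipode k (P.e j) * P.e l) = counit (R := k) x • 1 := by
  have h := mul_antipode_rTensor_comul_apply (R := k) x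
  simpa [P.comul_eq_sum x, map_sum, Algebra.algebraMap_eq_smul_one] using h

lemma sum_smul_mul_SinvU (φ : A →ₗ[k] k) :
    ∑ j, ∑ l, φ (P.f j * P.f l) • (P.e l * P.SinvU (P.e j)) = φ 1 • 1 := by
  set y := ∑ s, φ (P.f s) • P.e s
  have hy : ∀ b, P.pair y b = φ b := fun b => by
    simp only [y, map_sum, map_smul, LinearMap.sum_apply, LinearMap.smul_apply, smul_eq_mul,
      mul_comm (φ _)]
    exact P.sum_pair_smul_map_f φ b
  simp only [← hy]
  apply Function.LeftInverse.injective P.SinvU_antipode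
  have h := mul_antipode_lTensor_comul_apply (R := k) y
  simpa [P.comul_eq_sum y, map_sum, antipode_mul_antidistrib, P.antipode_SinvU,
    Algebra.algebraMap_eq_smul_one, P.pair_one_right] using h

lemma pair_SinvU (z : U) (b : A) : P.pair (P.SinvU z) b = P.pair z (P.SinvA b) := by
  have h := P.pair_antipode (P.SinvU z) (P.SinvA b)
  rw [P.antipode_SinvU, P.antipode_SinvA] at h
  exact h.symm

/-- `P.act y a = a₍₁₎ ⟨y, a₍₂₎⟩`. -/
noncomputable def act : U →ₗ[k] A →ₗ[k] A :=
  LinearMap.mk₂ k (fun y a => TensorProduct.rid k A ((P.pair y).lTensor A (comul a)))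
    (fun y y' a => by simp [LinearMap.lTensor_add]) (fun c y a => by simp [LinearMap.lTensor_smul])
    (fun y a b => by simp) (fun c y a => by simp)

lemma act_apply (y : U) (a : A) :
    P.act y a = TensorProduct.rid k A ((P.pair y).lTensor A (comul a)) := rfl

lemma pair_act (z y : U) (a : A) : P.pair z (P.act y a) = P.pair (z * y) a := by
  rw [act_apply, P.pair_mul_left]
  induction comul (R := k) a with
  | zero => simp
  | tmul b c => simp [mul_comm]
  | add s t hs ht => simp only [map_add, hs, ht]

lemma act_act (y z : U) (a : A) : P.act y (P.act z a) = P.act (y * z) a :=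
  P.eq_of_forall_pair_eq fun w => by rw [pair_act, pair_act, pair_act, mul_assoc]

lemma act_one (a : A) : P.act 1 a = a :=
  P.eq_of_forall_pair_eq fun w => by rw [pair_act, mul_one]

lemma sum_act_tmul (a : A) : ∑ j, P.act (P.e j) a ⊗ₜ[k] P.f j = comul (R := k) a := by
  simp only [act_apply]
  induction comul (R := k) a with
  | zero => simp
  | tmul b c =>
    simp only [LinearMap.lTensor_tmul, TensorProduct.rid_tmul, TensorProduct.smul_tmul,
      ← TensorProduct.tmul_sum, P.expand_A]
  | add s t hs ht => simp only [map_add, TensorProduct.add_tmul, Finset.sum_add_distrib, hs, ht]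

lemma sum_act_mul_antipode (a : A) :
    ∑ j, P.act (P.e j) a * antipode k (P.f j) = counit (R := k) a • 1 := by
  have h := mul_antipode_lTensor_comul_apply (R := k) a
  rw [← P.sum_act_tmul a] at h
  simpa [map_sum, Algebra.algebraMap_eq_smul_one] using h

lemma sum_act_SinvU_mul_antipode_antipode (a : A) :
    ∑ j, P.act (P.SinvU (P.e j)) a * antipode k (antipode k (P.f j)) =
      counit (R := k) a • 1 := by
  have h := P.sum_map_left_eq_sum_map_right
    ((LinearMap.mul k A).compl₁₂ (P.act.flip a) (antipode k ∘ₗ antipode k))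
    P.SinvU P.SinvA P.pair_SinvU
  simp only [LinearMap.compl₁₂_apply, LinearMap.flip_apply, LinearMap.comp_apply,
    LinearMap.mul_apply', P.antipode_SinvA] at h
  rw [h, P.sum_act_mul_antipode]

lemma sum_map_act {M : Type*} [AddCommMonoid M] [Module k M] (Φ : U →ₗ[k] A →ₗ[k] M) (y : U) :
    ∑ i, Φ (P.e i) (P.act y (P.f i)) = ∑ i, Φ (P.e i * y) (P.f i) :=
  (P.sum_map_left_eq_sum_map_right Φ (· * y) (P.act y) fun z b => (P.pair_act z y b).symm).symm

section Cross

variable {H : Type*} [Ring H] [Algebra k H] (ιA : A →ₐ[k] H) (ιU : U →ₐ[k] H)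

lemma crossRHS_tmul (x : U) (a : A) :
    crossRHS P.pair ιA ιU (x ⊗ₜ[k] a) =
      ∑ j, ∑ l, P.pair x (P.f j * P.f l) • (ιA (P.act (P.e j) a) * ιU (P.e l)) := by
  simp only [crossRHS, LinearMap.comp_apply, TensorProduct.map_tmul, P.comul_eq_sum x,
    TensorProduct.sum_tmul, ← TensorProduct.smul_tmul', map_sum, map_smul]
  refine Finset.sum_congr rfl fun j _ => Finset.sum_congr rfl fun l _ => ?_
  rw [act_apply]
  induction comul (R := k) a with
  | zero => simp
  | tmul b c => simp
  | add s t hs ht => simp only [map_add, TensorProduct.tmul_add, hs, ht, add_mul, smul_add]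

lemma ιA_mul_ιU_eq_sum (hcross : ∀ x a, ιU x * ιA a = crossRHS P.pair ιA ιU (x ⊗ₜ[k] a))
    (a : A) (x : U) :
    ιA a * ιU x =
      ∑ j, ∑ l, P.pair x (P.f j * P.f l) • (ιU (P.e l) * ιA (P.act (P.SinvU (P.e j)) a)) := by
  simp_rw [hcross, P.crossRHS_tmul, P.act_act]
  symm
  calc _ = ∑ j, ∑ m, ∑ n, P.pair x (P.f j * P.f m * P.f n) •
          (ιA (P.act (P.e m * P.SinvU (P.e j)) a) * ιU (P.e n)) := by
        refine Finset.sum_congr rfl fun j _ => ?_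
        simp_rw [Finset.smul_sum, smul_smul]
        rw [Finset.sum_comm]
        refine Finset.sum_congr rfl fun m _ => ?_
        rw [Finset.sum_comm]
        refine Finset.sum_congr rfl fun n _ => ?_
        rw [← Finset.sum_smul, mul_assoc]
        congr 1
        simpa [mul_comm] using
          P.sum_pair_smul_map_f (P.pair x ∘ₗ LinearMap.mulLeft k (P.f j)) (P.f m * P.f n)
    _ = ∑ n, ιA (P.act (∑ j, ∑ m, P.pair x (P.f j * P.f m * P.f n) •
          (P.e m * P.SinvU (P.e j))) a) * ιU (P.e n) := by
        simp only [map_sum, map_smul, LinearMap.sum_apply, LinearMap.smul_apply, Finset.sum_mul,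
          smul_mul_assoc]
        exact (Finset.sum_congr rfl fun j _ => Finset.sum_comm).trans Finset.sum_comm
    _ = ∑ n, P.pair x (P.f n) • (ιA a * ιU (P.e n)) := by
        refine Finset.sum_congr rfl fun n _ => ?_
        have h := P.sum_smul_mul_SinvU (P.pair x ∘ₗ LinearMap.mulRight k (P.f n))
        simp only [LinearMap.comp_apply, LinearMap.mulRight_apply, one_mul] at h
        rw [h, map_smul, LinearMap.smul_apply, P.act_one, map_smul, smul_mul_assoc]
    _ = ιA a * ιU x :=
        P.sum_pair_smul_map_e (LinearMap.mulLeft k (ιA a) ∘ₗ ιU.toLinearMap) x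

noncomputable def vacuum : H :=
  ∑ i, ιU (antipode k (antipode k (P.e i))) * ιA (P.f i)

lemma vacuum_eq_sum_ιU_mul_ιA_antipode_antipode :
    P.vacuum ιA ιU = ∑ i, ιU (P.e i) * ιA (antipode k (antipode k (P.f i))) := by
  have h := P.sum_map_left_eq_sum_map_right
    ((LinearMap.mul k H).compl₁₂ ιU.toLinearMap ιA.toLinearMap)
    (fun z => antipode k (antipode k z)) (fun b => antipode k (antipode k b))
    (fun z b => by rw [P.pair_antipode, P.pair_antipode])
  simpa [vacuum] using h

lemma vacuum_mul_ιU (hcross : ∀ x a, ιU x * ιA a = crossRHS P.pair ιA ιU (x ⊗ₜ[k] a)) (x : U) :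
    P.vacuum ιA ιU * ιU x = counit (R := k) x • P.vacuum ιA ιU := by
  calc P.vacuum ιA ιU * ιU x
      = ∑ j, ∑ l, P.pair x (P.f j * P.f l) • ∑ i,
          ιU (antipode k (antipode k (P.e i)) * P.e l) * ιA (P.act (P.SinvU (P.e j)) (P.f i)) := by
        simp_rw [vacuum, Finset.sum_mul, mul_assoc, P.ιA_mul_ιU_eq_sum ιA ιU hcross, Finset.mul_sum,
          mul_smul_comm, ← mul_assoc, ← map_mul, Finset.smul_sum]
        exact Finset.sum_comm.trans (Finset.sum_congr rfl fun _ _ => Finset.sum_comm)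
    _ = ∑ j, ∑ l, P.pair x (P.f j * P.f l) • ∑ i,
          ιU (antipode k (antipode k (P.e i)) * (antipode k (P.e j) * P.e l)) * ιA (P.f i) := by
        refine Finset.sum_congr rfl fun j _ => Finset.sum_congr rfl fun l _ => ?_
        have h := P.sum_map_act ((LinearMap.mul k H).compl₁₂
          (ιU.toLinearMap ∘ₗ LinearMap.mulRight k (P.e l) ∘ₗ antipode k ∘ₗ antipode k)
          ιA.toLinearMap) (P.SinvU (P.e j))
        simp only [LinearMap.compl₁₂_apply, LinearMap.comp_apply, LinearMap.mulRight_apply,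
          AlgHom.toLinearMap_apply, LinearMap.mul_apply', antipode_antipode_mul,
          P.antipode_SinvU] at h
        simp_rw [h, mul_assoc]
    _ = ∑ i, ιU (antipode k (antipode k (P.e i)) *
          ∑ j, ∑ l, P.pair x (P.f j * P.f l) • (antipode k (P.e j) * P.e l)) * ιA (P.f i) := by
        simp only [Finset.mul_sum, mul_smul_comm, map_sum, map_smul, Finset.sum_mul,
          smul_mul_assoc, Finset.smul_sum]
        exact (Finset.sum_comm.trans (Finset.sum_congr rfl fun _ _ => Finset.sum_comm)).symm
    _ = counit (R := k) x • P.vacuum ιA ιU := by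
        simp_rw [P.sum_pair_smul_antipode_mul, mul_smul_comm, mul_one, map_smul, smul_mul_assoc,
          vacuum, Finset.smul_sum]

lemma ιA_mul_vacuum (hcross : ∀ x a, ιU x * ιA a = crossRHS P.pair ιA ιU (x ⊗ₜ[k] a)) (a : A) :
    ιA a * P.vacuum ιA ιU = counit (R := k) a • P.vacuum ιA ιU := by
  rw [P.vacuum_eq_sum_ιU_mul_ιA_antipode_antipode]
  calc ιA a * ∑ i, ιU (P.e i) * ιA (antipode k (antipode k (P.f i)))
      = ∑ j, ∑ l, ∑ i, P.pair (P.e i) (P.f j * P.f l) • (ιU (P.e l) *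
          ιA (P.act (P.SinvU (P.e j)) a * antipode k (antipode k (P.f i)))) := by
        simp_rw [Finset.mul_sum, ← mul_assoc, P.ιA_mul_ιU_eq_sum ιA ιU hcross, Finset.sum_mul,
          smul_mul_assoc, mul_assoc, ← map_mul]
        exact Finset.sum_comm.trans (Finset.sum_congr rfl fun _ _ => Finset.sum_comm)
    _ = ∑ j, ∑ l, ιU (P.e l) *
          ιA (P.act (P.SinvU (P.e j)) a * antipode k (antipode k (P.f j * P.f l))) := by
        refine Finset.sum_congr rfl fun j _ => Finset.sum_congr rfl fun l _ => ?_
        exact P.sum_pair_smul_map_f (LinearMap.mulLeft k (ιU (P.e l)) ∘ₗ ιA.toLinearMap ∘ₗ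
          LinearMap.mulLeft k (P.act (P.SinvU (P.e j)) a) ∘ₗ antipode k ∘ₗ antipode k) _
    _ = ∑ l, ιU (P.e l) * ιA ((∑ j, P.act (P.SinvU (P.e j)) a *
          antipode k (antipode k (P.f j))) * antipode k (antipode k (P.f l))) := by
        simp only [antipode_antipode_mul, ← mul_assoc, Finset.sum_mul, map_sum, Finset.mul_sum]
        exact Finset.sum_comm
    _ = counit (R := k) a • ∑ i, ιU (P.e i) * ιA (antipode k (antipode k (P.f i))) := by
        simp_rw [P.sum_act_SinvU_mul_antipode_antipode, smul_mul_assoc, one_mul, map_smul,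
          mul_smul_comm, Finset.smul_sum]

end Cross

end PairedHopf

open Coalgebra HopfAlgebra in
/-- In the semidirect product `A ⋊ U`, the vacuum projector `Ē = ∑ i, S²(e i) · f i`
satisfies `Ē x = ε(x) Ē` for all `x ∈ U` and `a Ē = ε(a) Ē` for all `a ∈ A`. -/
theorem vacuum_projector_Ebar
    {k U A H ι : Type*} [Field k] [Ring U] [Ring A] [Ring H]
    [HopfAlgebra k U] [HopfAlgebra k A] [Algebra k H] [Fintype ι] [DecidableEq ι]
    (P : PairedHopf k U A ι) (ιA : A →ₐ[k] H) (ιU : U →ₐ[k] H)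
    (hcross : ∀ (x : U) (a : A),
      ιU x * ιA a = crossRHS P.pair ιA ιU (x ⊗ₜ[k] a)) :
    (∀ x : U,
      (∑ i, ιU (antipode (R := k) (antipode (R := k) (P.e i))) * ιA (P.f i)) * ιU x =
        counit (R := k) x •
          ∑ i, ιU (antipode (R := k) (antipode (R := k) (P.e i))) * ιA (P.f i)) ∧
    (∀ a : A,
      ιA a * (∑ i, ιU (antipode (R := k) (antipode (R := k) (P.e i))) * ιA (P.f i)) =
        counit (R := k) a •
          ∑ i, ιU (antipode (R := k) (antipode (R := k) (P.e i))) * ιA (P.f i)) :=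
  ⟨P.vacuum_mul_ιU ιA ιU hcross, P.ιA_mul_vacuum ιA ιU hcross⟩
end

section
/- Let ⟨·⟩ be a biinvariant integral on a finite-dimensional Hopf algebra A with ⟨1⟩ = 1. Then ⟨S(a)⟩ = ⟨a⟩ for all a ∈ A, and the Fourier transform satisfies ⟨S²(a)⟩^ = S^{-2}(â), i.e. F(S²(a)) = S^{-2}(F(a)). -/
/-!
Applying `⟨·⟩ ∘ S` to the invariance identity `⟨a₁⟩ a₂ = ⟨a⟩ 1` gives `⟨a₁⟩ ⟨S a₂⟩ = ⟨a⟩`.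
Applying `⟨·⟩ ∘ S⁻¹` to the same identity for `S a`, whose coproduct is `S a₂ ⊗ S a₁`, gives the
same sum, now equal to `⟨S a⟩`. Hence `⟨S a⟩ = ⟨a⟩`, and with `S(xy) = S y S x` this yields
`⟨S²(a) b⟩ = ⟨a S⁻²(b)⟩`. Since `S⁻¹` on `U` is the transpose of `S⁻¹` on `A`, this is
`F(S² a) = S⁻²(F a)`.
-/

open TensorProduct

open Coalgebra HopfAlgebra

theorem mul'_map_comul_of_invariant {k A : Type*} [CommSemiring k] [Semiring A]
    [Bialgebra k A] {Int : A →ₗ[k] k}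
    (hinv : ∀ a : A,
      TensorProduct.lid k A (TensorProduct.map Int LinearMap.id (comul (R := k) a)) =
        Int a • (1 : A))
    (g : A →ₗ[k] k) (a : A) :
    (LinearMap.mul' k k ∘ₗ TensorProduct.map Int g) (comul (R := k) a) = Int a * g 1 := by
  have hg : g ∘ₗ (TensorProduct.lid k A).toLinearMap ∘ₗ TensorProduct.map Int LinearMap.id =
      LinearMap.mul' k k ∘ₗ TensorProduct.map Int g := by
    ext; simp
  rw [← hg, LinearMap.comp_apply, LinearMap.comp_apply, LinearEquiv.coe_coe, hinv, map_smul,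
    smul_eq_mul]

namespace PairedHopf

variable {k U A ι : Type*} [Field k] [Ring U] [Ring A]
  [HopfAlgebra k U] [HopfAlgebra k A] [Fintype ι] [DecidableEq ι]

theorem pair_SinvU_s14 (P : PairedHopf k U A ι) (x : U) (a : A) :
    P.pair (P.SinvU x) a = P.pair x (P.SinvA a) := by
  conv_lhs => rw [← P.antipode_SinvA a]
  rw [← P.pair_antipode, P.antipode_SinvU]

theorem SinvA_one (P : PairedHopf k U A ι) : P.SinvA 1 = 1 := by
  simpa using P.SinvA_antipode 1

theorem tensor_ext (P : PairedHopf k U A ι) {t t' : A ⊗[k] A}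
    (h : ∀ x y : U, (LinearMap.mul' k k ∘ₗ TensorProduct.map (P.pair x) (P.pair y)) t =
      (LinearMap.mul' k k ∘ₗ TensorProduct.map (P.pair x) (P.pair y)) t') : t = t' := by
  have expand : ∀ t : A ⊗[k] A, ∑ i, ∑ j,
      (LinearMap.mul' k k ∘ₗ TensorProduct.map (P.pair (P.e i)) (P.pair (P.e j))) t •
        (P.f i ⊗ₜ[k] P.f j) = t := by
    intro t
    induction t using TensorProduct.induction_on with
    | zero => simp
    | tmul a b =>
      conv_rhs => rw [← P.expand_A a, ← P.expand_A b]
      simp only [sum_tmul, tmul_sum, smul_tmul_smul, LinearMap.comp_apply, map_tmul,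
        LinearMap.mul'_apply]
      exact Finset.sum_comm
    | add t t' ht ht' => simp only [map_add, add_smul, Finset.sum_add_distrib, ht, ht']
  rw [← expand t, ← expand t']
  simp only [h]

/-- Dual, through the pairing, to `S (x * y) = S y * S x` in `U`. -/
theorem comul_antipode (P : PairedHopf k U A ι) (a : A) :
    comul (R := k) (antipode k a) =
      TensorProduct.map (antipode k) (antipode k)
        (TensorProduct.comm k A A (comul (R := k) a)) := by
  refine P.tensor_ext fun x y => ?_
  have hswap : (LinearMap.mul' k k ∘ₗ TensorProduct.map (P.pair x) (P.pair y)) ∘ₗ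
      TensorProduct.map (antipode k) (antipode k) ∘ₗ (TensorProduct.comm k A A).toLinearMap =
      LinearMap.mul' k k ∘ₗ
        TensorProduct.map (P.pair (antipode k y)) (P.pair (antipode k x)) := by
    ext; simp [P.pair_antipode, mul_comm]
  rw [← P.pair_mul_left, ← P.pair_antipode, antipode_mul_antidistrib, P.pair_mul_left,
    ← hswap]
  rfl

theorem integral_antipode (P : PairedHopf k U A ι) {Int : A →ₗ[k] k}
    (hinv : ∀ a : A,
      TensorProduct.lid k A (TensorProduct.map Int LinearMap.id (comul (R := k) a)) =
        Int a • (1 : A))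
    (hone : Int 1 = 1) (a : A) : Int (antipode k a) = Int a := by
  have hswap : (LinearMap.mul' k k ∘ₗ TensorProduct.map Int (Int ∘ₗ P.SinvA)) ∘ₗ
      TensorProduct.map (antipode k) (antipode k) ∘ₗ (TensorProduct.comm k A A).toLinearMap =
      LinearMap.mul' k k ∘ₗ TensorProduct.map Int (Int ∘ₗ antipode k) := by
    ext; simp [P.SinvA_antipode, mul_comm]
  calc Int (antipode k a)
      = (LinearMap.mul' k k ∘ₗ TensorProduct.map Int (Int ∘ₗ P.SinvA))
          (comul (R := k) (antipode k a)) := by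
        rw [mul'_map_comul_of_invariant hinv, LinearMap.comp_apply, P.SinvA_one, hone, mul_one]
    _ = (LinearMap.mul' k k ∘ₗ TensorProduct.map Int (Int ∘ₗ antipode k))
          (comul (R := k) a) := by
        rw [P.comul_antipode, ← hswap]
        rfl
    _ = Int a := by
        rw [mul'_map_comul_of_invariant hinv, LinearMap.comp_apply, antipode_one, hone, mul_one]

theorem apply_antipode_antipode_mul (P : PairedHopf k U A ι) {φ : A →ₗ[k] k}
    (hφ : ∀ a, φ (antipode k a) = φ a) (a b : A) :
    φ (antipode k (antipode k a) * b) = φ (a * P.SinvA (P.SinvA b)) := by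
  conv_lhs => rw [← P.antipode_SinvA b, ← antipode_mul_antidistrib, hφ,
    ← P.antipode_SinvA (P.SinvA b), ← antipode_mul_antidistrib, hφ]

def ofDual (P : PairedHopf k U A ι) (φ : Module.Dual k A) : U :=
  ∑ i, φ (P.f i) • P.e i

theorem pair_ofDual (P : PairedHopf k U A ι) (φ : Module.Dual k A) (b : A) :
    P.pair (P.ofDual φ) b = φ b := by
  conv_rhs => rw [← P.expand_A b]
  simp only [ofDual, map_sum, map_smul, LinearMap.sum_apply, LinearMap.smul_apply, smul_eq_mul,
    mul_comm]

theorem SinvU_ofDual (P : PairedHopf k U A ι) (φ : Module.Dual k A) :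
    P.SinvU (P.ofDual φ) = P.ofDual (φ ∘ₗ P.SinvA) := by
  conv_lhs => rw [← P.expand_U (P.SinvU _)]
  simp only [pair_SinvU_s14, pair_ofDual]
  rfl

end PairedHopf

open Coalgebra HopfAlgebra in
theorem integral_antipode_and_fourier_S2_general
    {k U A ι : Type*} [Field k] [Ring U] [Ring A]
    [HopfAlgebra k U] [HopfAlgebra k A] [Fintype ι] [DecidableEq ι]
    (P : PairedHopf k U A ι)
    (Int : A →ₗ[k] k)
    (hrinv : ∀ a : A,
      (TensorProduct.lid k A) (TensorProduct.map Int LinearMap.id (comul (R := k) a)) =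
        Int a • (1 : A))
    (hone : Int 1 = 1) :
    (∀ a : A, Int (antipode (R := k) a) = Int a) ∧
    (∀ a : A,
      (∑ i, Int (antipode (R := k) (antipode (R := k) a) * P.SinvA (P.f i)) • P.e i) =
        P.SinvU (P.SinvU (∑ i, Int (a * P.SinvA (P.f i)) • P.e i))) := by
  have hS := P.integral_antipode hrinv hone
  refine ⟨hS, fun a => ?_⟩
  change P.ofDual (Int ∘ₗ LinearMap.mulLeft k (antipode k (antipode k a)) ∘ₗ P.SinvA) =
    P.SinvU (P.SinvU (P.ofDual (Int ∘ₗ LinearMap.mulLeft k a ∘ₗ P.SinvA)))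
  rw [P.SinvU_ofDual, P.SinvU_ofDual]
  congr 1
  ext b
  simp [P.apply_antipode_antipode_mul hS]

open Coalgebra HopfAlgebra in
/-- For a biinvariant normalized integral `⟨·⟩` (`⟨1⟩ = 1`) on a finite-dimensional Hopf
algebra `A`: `⟨S(a)⟩ = ⟨a⟩` for all `a`, and the Fourier transform
`â = ∑ i ⟨a S⁻¹(f i)⟩ e i` satisfies `F(S²(a)) = S⁻²(F(a))`. -/
theorem integral_antipode_and_fourier_S2
    {k U A ι : Type*} [Field k] [Ring U] [Ring A]
    [HopfAlgebra k U] [HopfAlgebra k A] [Fintype ι] [DecidableEq ι]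
    (P : PairedHopf k U A ι)
    (Int : A →ₗ[k] k)
    (hrinv : ∀ a : A,
      (TensorProduct.lid k A) (TensorProduct.map Int LinearMap.id (comul (R := k) a)) =
        Int a • (1 : A))
    (hlinv : ∀ a : A,
      (TensorProduct.rid k A) (TensorProduct.map LinearMap.id Int (comul (R := k) a)) =
        Int a • (1 : A))
    (hone : Int 1 = 1) :
    (∀ a : A, Int (antipode (R := k) a) = Int a) ∧
    (∀ a : A,
      (∑ i, Int (antipode (R := k) (antipode (R := k) a) * P.SinvA (P.f i)) • P.e i) =
        P.SinvU (P.SinvU (∑ i, Int (a * P.SinvA (P.f i)) • P.e i))) :=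
  integral_antipode_and_fourier_S2_general P Int hrinv hone
end
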